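/- arXiv:2406.03073 — 6 statements merged into one kernel-verified Lean document; each statement's English description precedes it below -/
import Mathlib

section
/- There is an absolute constant C > 0 such that for every integer k ≥ 12 and every real number t, one has |log(|Γ(k − 1/2 + it)|²) − (k − 1)·log((k − 1/2)² + t²) + 2t·arctan(t/(k − 1/2)) + 2k| ≤ C, where Γ denotes the complex Gamma function. (Uniform Stirling expansion for the Gamma factor appearing in Watson's formula.) -/
/-!
Write `k = n + 1`. The functional equation and the reflection formula
`|Γ(1/2 + it)|² = π / cosh(πt)` give
`log |Γ(k - 1/2 + it)|² = log π - log cosh(πt) + ∑_{j<n} log((j + 1/2)² + t²)`.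
The sum is the midpoint rule for
`∫₀ⁿ log(x² + t²) dx = n log(n² + t²) - 2n + 2t arctan(n/t)`.
On `[j, j + 1]` with `j ≥ 1` the second derivative of the integrand is at most `2/(j² + t²)`,
so the errors are at most `1/(2j²)` uniformly in `t` and sum to at most `1`; the interval
`[0, 1]`, where the second derivative is unbounded as `t → 0`, is estimated directly.
The remaining terms are controlled by `π|t| - log cosh(πt) ∈ [0, log 2]`,
`n log(((n + 1/2)² + t²)/(n² + t²)) ∈ [0, 2]` and `t arctan(t/σ) + t arctan(σ/t) = π|t|/2`.
-/

open Real

theorem Real.abs_arctan_sub_arctan_le (x y : ℝ) : |arctan x - arctan y| ≤ |x - y| := by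
  have hderiv : ∀ z ∈ (Set.univ : Set ℝ),
      HasDerivWithinAt arctan (1 / (1 + z ^ 2)) Set.univ z :=
    fun z _ => (hasDerivAt_arctan z).hasDerivWithinAt
  have hbound : ∀ z ∈ (Set.univ : Set ℝ), ‖1 / (1 + z ^ 2)‖ ≤ 1 := fun z _ => by
    rw [norm_of_nonneg (by positivity)]
    exact div_le_one_of_le₀ (by nlinarith [sq_nonneg z]) (by positivity)
  simpa using convex_univ.norm_image_sub_le_of_norm_hasDerivWithin_le hderiv hbound
    (Set.mem_univ y) (Set.mem_univ x)

theorem Real.abs_mul_arctan_div_sub_arctan_div_le (t a b : ℝ) :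
    |t * (arctan (a / t) - arctan (b / t))| ≤ |a - b| := by
  rcases eq_or_ne t 0 with rfl | ht
  · simp
  calc |t * (arctan (a / t) - arctan (b / t))| ≤ |t| * |a / t - b / t| := by
        rw [abs_mul]; exact mul_le_mul_of_nonneg_left (abs_arctan_sub_arctan_le _ _) (abs_nonneg t)
    _ = |a - b| := by rw [← abs_mul, mul_sub, mul_div_cancel₀ _ ht, mul_div_cancel₀ _ ht]

theorem Real.mul_arctan_div_add_mul_arctan_div {σ : ℝ} (hσ : 0 < σ) (t : ℝ) :
    t * arctan (t / σ) + t * arctan (σ / t) = π / 2 * |t| := by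
  rcases lt_trichotomy t 0 with ht | rfl | ht
  · rw [← inv_div, arctan_inv_of_neg (div_neg_of_pos_of_neg hσ ht), abs_of_neg ht]; ring
  · simp
  · rw [← inv_div, arctan_inv_of_pos (div_pos hσ ht), abs_of_pos ht]; ring

theorem Real.abs_sub_log_cosh_mem_Icc (x : ℝ) : |x| - log (cosh x) ∈ Set.Icc 0 (log 2) := by
  rw [← cosh_abs]
  set y := |x|
  have hexp : exp (-y) ≤ exp y := exp_le_exp.mpr (by linarith [abs_nonneg x])
  have hcosh : exp y / 2 ≤ cosh y ∧ cosh y ≤ exp y := by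
    rw [cosh_eq]; constructor <;> linarith [exp_pos (-y)]
  constructor
  · linarith [log_le_log (cosh_pos y) hcosh.2, log_exp y]
  · have := log_le_log (by positivity) hcosh.1
    rw [log_div (exp_pos y).ne' two_ne_zero, log_exp] at this
    linarith

theorem abs_second_symmetric_difference_le {f f' f'' : ℝ → ℝ} {m r M : ℝ} (hr : 0 ≤ r)
    (hf : ∀ x ∈ Set.Icc (m - r) (m + r), HasDerivAt f (f' x) x)
    (hf' : ∀ x ∈ Set.Icc (m - r) (m + r), HasDerivAt f' (f'' x) x)
    (hM : ∀ x ∈ Set.Icc (m - r) (m + r), |f'' x| ≤ M) :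
    ∀ h ∈ Set.Icc 0 r, |f (m + h) + f (m - h) - 2 * f m| ≤ 2 * M * r * h := by
  have hmem : ∀ h ∈ Set.Icc 0 r,
      m + h ∈ Set.Icc (m - r) (m + r) ∧ m - h ∈ Set.Icc (m - r) (m + r) :=
    fun h ⟨h0, hr⟩ => ⟨⟨by linarith, by linarith⟩, ⟨by linarith, by linarith⟩⟩
  have hM0 : 0 ≤ M := (abs_nonneg _).trans (hM m ⟨by linarith, by linarith⟩)
  have hf'_sub : ∀ h ∈ Set.Ico 0 r, |f' (m + h) - f' (m - h)| ≤ 2 * M * r := by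
    intro h hh
    have hh' := Set.Ico_subset_Icc_self hh
    calc |f' (m + h) - f' (m - h)| ≤ M * |m + h - (m - h)| :=
          (convex_Icc (m - r) (m + r)).norm_image_sub_le_of_norm_hasDerivWithin_le
            (fun x hx => (hf' x hx).hasDerivWithinAt) hM (hmem h hh').2 (hmem h hh').1
      _ ≤ 2 * M * r := by
        rw [show m + h - (m - h) = 2 * h by ring, abs_of_nonneg (by linarith [hh.1])]
        nlinarith [hh.2]
  have hderiv : ∀ x ∈ Set.Icc 0 r,
      HasDerivWithinAt (fun h => f (m + h) + f (m - h) - 2 * f m)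
        (f' (m + x) - f' (m - x)) (Set.Icc 0 r) x := fun x hx => by
    have := (((hf _ (hmem x hx).1).comp_const_add m x).add
      ((hf _ (hmem x hx).2).comp_const_sub m x)).sub_const (2 * f m)
    exact this.hasDerivWithinAt.congr_deriv (by ring)
  intro h hh
  have := norm_image_sub_le_of_norm_deriv_le_segment' hderiv hf'_sub h hh
  rwa [add_zero, sub_zero, sub_zero, show f m + f m - 2 * f m = 0 by ring, sub_zero] at this

theorem abs_midpoint_rule_error_le {F f f' f'' : ℝ → ℝ} {m r M : ℝ} (hr : 0 ≤ r)
    (hF : ∀ x ∈ Set.Icc (m - r) (m + r), HasDerivAt F (f x) x)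
    (hf : ∀ x ∈ Set.Icc (m - r) (m + r), HasDerivAt f (f' x) x)
    (hf' : ∀ x ∈ Set.Icc (m - r) (m + r), HasDerivAt f' (f'' x) x)
    (hM : ∀ x ∈ Set.Icc (m - r) (m + r), |f'' x| ≤ M) :
    |F (m + r) - F (m - r) - 2 * r * f m| ≤ 2 * M * r ^ 3 := by
  have hmem : ∀ h ∈ Set.Icc 0 r,
      m + h ∈ Set.Icc (m - r) (m + r) ∧ m - h ∈ Set.Icc (m - r) (m + r) :=
    fun h ⟨h0, hr⟩ => ⟨⟨by linarith, by linarith⟩, ⟨by linarith, by linarith⟩⟩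
  have hM0 : 0 ≤ M := (abs_nonneg _).trans (hM m ⟨by linarith, by linarith⟩)
  have hderiv : ∀ x ∈ Set.Icc 0 r,
      HasDerivWithinAt (fun h => F (m + h) - F (m - h) - 2 * h * f m)
        (f (m + x) + f (m - x) - 2 * f m) (Set.Icc 0 r) x := fun x hx => by
    have := (((hF _ (hmem x hx).1).comp_const_add m x).sub
      ((hF _ (hmem x hx).2).comp_const_sub m x)).sub
      (((hasDerivAt_id x).const_mul 2).mul_const (f m))
    exact this.hasDerivWithinAt.congr_deriv (by ring)
  have hbound : ∀ x ∈ Set.Ico 0 r, ‖f (m + x) + f (m - x) - 2 * f m‖ ≤ 2 * M * r * r :=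
    fun x hx =>
      (abs_second_symmetric_difference_le hr hf hf' hM x (Set.Ico_subset_Icc_self hx)).trans
        (mul_le_mul_of_nonneg_left hx.2.le (by positivity))
  have := norm_image_sub_le_of_norm_deriv_le_segment' hderiv hbound r ⟨hr, le_rfl⟩
  rw [add_zero, sub_zero, sub_zero, mul_zero, zero_mul, sub_self, sub_zero, sub_zero] at this
  calc _ ≤ 2 * M * r * r * r := this
    _ = 2 * M * r ^ 3 := by ring

noncomputable def logSqAddSqPrimitive (t x : ℝ) : ℝ :=
  x * log (x ^ 2 + t ^ 2) - 2 * x + 2 * t * arctan (x / t)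

@[simp]
theorem logSqAddSqPrimitive_zero (t : ℝ) : logSqAddSqPrimitive t 0 = 0 := by
  simp [logSqAddSqPrimitive]

theorem hasDerivAt_log_sq_add_sq (t : ℝ) {x : ℝ} (hx : x ^ 2 + t ^ 2 ≠ 0) :
    HasDerivAt (fun x => log (x ^ 2 + t ^ 2)) (2 * x / (x ^ 2 + t ^ 2)) x := by
  simpa using ((hasDerivAt_pow 2 x).add_const (t ^ 2)).log hx

theorem hasDerivAt_two_mul_div_sq_add_sq (t : ℝ) {x : ℝ} (hx : x ^ 2 + t ^ 2 ≠ 0) :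
    HasDerivAt (fun x => 2 * x / (x ^ 2 + t ^ 2))
      (2 * (t ^ 2 - x ^ 2) / (x ^ 2 + t ^ 2) ^ 2) x := by
  have := ((hasDerivAt_id' x).const_mul 2).div ((hasDerivAt_pow 2 x).add_const (t ^ 2)) hx
  exact this.congr_deriv (by simp; ring)

theorem hasDerivAt_logSqAddSqPrimitive (t : ℝ) {x : ℝ} (hx : x ≠ 0) :
    HasDerivAt (logSqAddSqPrimitive t) (log (x ^ 2 + t ^ 2)) x := by
  have hpos : 0 < x ^ 2 + t ^ 2 := by positivity
  have harctan : HasDerivAt (fun x => 2 * t * arctan (x / t)) (2 * t ^ 2 / (x ^ 2 + t ^ 2)) x := by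
    rcases eq_or_ne t 0 with rfl | ht
    · simpa using hasDerivAt_const x (0 : ℝ)
    · have := (((hasDerivAt_id' x).div_const t).arctan).const_mul (2 * t)
      exact this.congr_deriv (by field_simp; ring)
  have := ((((hasDerivAt_id' x).mul (hasDerivAt_log_sq_add_sq t hpos.ne')).sub
    ((hasDerivAt_id' x).const_mul 2)).add harctan)
  exact this.congr_deriv (by field_simp; ring)

theorem abs_logSqAddSqPrimitive_one_sub_log_le (t : ℝ) :
    |logSqAddSqPrimitive t 1 - log (1 / 4 + t ^ 2)| ≤ 4 := by
  have harctan : |t * arctan (1 / t)| ≤ 1 := by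
    simpa using abs_mul_arctan_div_sub_arctan_div_le t 1 0
  have hlog_le : log (1 / 4 + t ^ 2) ≤ log (1 + t ^ 2) :=
    log_le_log (by positivity) (by linarith)
  have hlog_ge : log (1 + t ^ 2) - log (1 / 4 + t ^ 2) ≤ 3 := by
    rw [← log_div (by positivity) (by positivity)]
    calc _ ≤ (1 + t ^ 2) / (1 / 4 + t ^ 2) - 1 := log_le_sub_one_of_pos (by positivity)
      _ ≤ 3 := by
        rw [div_sub_one (by positivity), div_le_iff₀ (by positivity)]
        nlinarith [sq_nonneg t]
  rw [abs_le] at harctan ⊢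
  simp only [logSqAddSqPrimitive, one_pow, one_mul]
  constructor <;> linarith

theorem abs_two_mul_sq_sub_sq_div_sq_le (t : ℝ) {a x : ℝ} (ha : 0 < a) (hx : a ≤ x) :
    |2 * (t ^ 2 - x ^ 2) / (x ^ 2 + t ^ 2) ^ 2| ≤ 2 / (a ^ 2 + t ^ 2) := by
  have hpos : 0 < x ^ 2 + t ^ 2 := by nlinarith [sq_nonneg t]
  calc |2 * (t ^ 2 - x ^ 2) / (x ^ 2 + t ^ 2) ^ 2|
      = |2 * (t ^ 2 - x ^ 2)| / (x ^ 2 + t ^ 2) ^ 2 := by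
        rw [abs_div, abs_of_pos (by positivity : (0 : ℝ) < (x ^ 2 + t ^ 2) ^ 2)]
    _ ≤ 2 * (x ^ 2 + t ^ 2) / (x ^ 2 + t ^ 2) ^ 2 := by
        gcongr
        rw [abs_le]
        constructor <;> nlinarith [sq_nonneg x, sq_nonneg t]
    _ = 2 / (x ^ 2 + t ^ 2) := by field_simp
    _ ≤ 2 / (a ^ 2 + t ^ 2) := by gcongr

theorem abs_logSqAddSqPrimitive_sub_sub_log_le (t : ℝ) {a : ℝ} (ha : 0 < a) :
    |logSqAddSqPrimitive t (a + 1) - logSqAddSqPrimitive t a - log ((a + 1 / 2) ^ 2 + t ^ 2)|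
      ≤ 1 / (2 * (a ^ 2 + t ^ 2)) := by
  have hmem : ∀ x ∈ Set.Icc (a + 1 / 2 - 1 / 2) (a + 1 / 2 + 1 / 2), a ≤ x := fun x hx => by
    linarith [hx.1]
  have hne : ∀ x ∈ Set.Icc (a + 1 / 2 - 1 / 2) (a + 1 / 2 + 1 / 2), x ^ 2 + t ^ 2 ≠ 0 :=
    fun x hx => (by nlinarith [hmem x hx, sq_nonneg t] : 0 < x ^ 2 + t ^ 2).ne'
  have := abs_midpoint_rule_error_le (M := 2 / (a ^ 2 + t ^ 2)) (by norm_num : (0 : ℝ) ≤ 1 / 2)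
    (fun x hx => hasDerivAt_logSqAddSqPrimitive t (by linarith [hmem x hx]))
    (fun x hx => hasDerivAt_log_sq_add_sq t (hne x hx))
    (fun x hx => hasDerivAt_two_mul_div_sq_add_sq t (hne x hx))
    (fun x hx => abs_two_mul_sq_sub_sq_div_sq_le t ha (hmem x hx))
  rw [show a + 1 / 2 + 1 / 2 = a + 1 by ring, show a + 1 / 2 - 1 / 2 = a by ring] at this
  calc _ = |logSqAddSqPrimitive t (a + 1) - logSqAddSqPrimitive t a
        - 2 * (1 / 2) * log ((a + 1 / 2) ^ 2 + t ^ 2)| := by ring_nf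
    _ ≤ _ := this
    _ = 1 / (2 * (a ^ 2 + t ^ 2)) := by field_simp

theorem abs_sum_log_sub_logSqAddSqPrimitive_le (t : ℝ) (n : ℕ) :
    |∑ j ∈ Finset.range n, log ((j + 1 / 2) ^ 2 + t ^ 2) - logSqAddSqPrimitive t n| ≤ 5 := by
  have htel : logSqAddSqPrimitive t n
      = ∑ j ∈ Finset.range n, (logSqAddSqPrimitive t (j + 1) - logSqAddSqPrimitive t j) := by
    simpa using (Finset.sum_range_sub (fun j : ℕ => logSqAddSqPrimitive t j) n).symm
  rw [htel, ← Finset.sum_sub_distrib]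
  rcases n.eq_zero_or_pos with rfl | hn
  · simp
  rw [Finset.range_eq_Ico, Finset.sum_eq_sum_Ico_succ_bot hn, Finset.Ico_add_one_left_eq_Ioo]
  have hfirst := abs_logSqAddSqPrimitive_one_sub_log_le t
  have hrest : ∀ j ∈ Finset.Ioo 0 n,
      |log ((j + 1 / 2) ^ 2 + t ^ 2) - (logSqAddSqPrimitive t (j + 1) - logSqAddSqPrimitive t j)|
        ≤ ((j : ℝ) ^ 2)⁻¹ / 2 := fun j hj => by
    have hj : (0 : ℝ) < j := by exact_mod_cast (Finset.mem_Ioo.mp hj).1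
    rw [abs_sub_comm, show ((j : ℝ) ^ 2)⁻¹ / 2 = 1 / (2 * j ^ 2) by ring]
    exact (abs_logSqAddSqPrimitive_sub_sub_log_le t hj).trans
      (one_div_le_one_div_of_le (by positivity) (by nlinarith [sq_nonneg t]))
  have hbasel := sum_Ioo_inv_sq_le (α := ℝ) 0 n
  calc _ ≤ _ := abs_add_le _ _
    _ ≤ 4 + ∑ j ∈ Finset.Ioo 0 n, ((j : ℝ) ^ 2)⁻¹ / 2 := by
        gcongr
        · norm_num
          rwa [abs_sub_comm]
        · exact (Finset.abs_sum_le_sum_abs _ _).trans (Finset.sum_le_sum hrest)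
    _ ≤ 5 := by
        rw [← Finset.sum_div]
        norm_num at hbasel
        linarith

theorem abs_mul_log_sq_add_sq_sub_log_le (t : ℝ) {n : ℝ} (hn : 1 ≤ n) :
    |n * (log ((n + 1 / 2) ^ 2 + t ^ 2) - log (n ^ 2 + t ^ 2))| ≤ 2 := by
  have hpos : 0 < n ^ 2 + t ^ 2 := by positivity
  rw [abs_of_nonneg (mul_nonneg (by linarith)
    (sub_nonneg.mpr (log_le_log hpos (by nlinarith))))]
  calc n * (log ((n + 1 / 2) ^ 2 + t ^ 2) - log (n ^ 2 + t ^ 2))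
      = n * log (((n + 1 / 2) ^ 2 + t ^ 2) / (n ^ 2 + t ^ 2)) := by
        rw [log_div (by positivity) hpos.ne']
    _ ≤ n * (((n + 1 / 2) ^ 2 + t ^ 2) / (n ^ 2 + t ^ 2) - 1) := by
        gcongr
        exact log_le_sub_one_of_pos (by positivity)
    _ ≤ 2 := by
        rw [div_sub_one hpos.ne', mul_div_assoc', div_le_iff₀ hpos]
        nlinarith [sq_nonneg t]

theorem Complex.Gamma_add_nat_eq_mul_prod {z : ℂ} (hz : ∀ j : ℕ, z + j ≠ 0) (n : ℕ) :
    Gamma (z + n) = Gamma z * ∏ j ∈ Finset.range n, (z + j) := by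
  induction n with
  | zero => simp
  | succ n ih =>
    rw [Nat.cast_succ, ← add_assoc, Gamma_add_one _ (hz n), ih, Finset.prod_range_succ]
    ring

theorem Complex.norm_Gamma_one_half_add_mul_I_sq (t : ℝ) :
    ‖Gamma (1 / 2 + t * I)‖ ^ 2 = π / Real.cosh (π * t) := by
  set z : ℂ := 1 / 2 + t * I
  have hconj : Gamma (1 - z) = (starRingEnd ℂ) (Gamma z) := by
    rw [← Gamma_conj]
    congr 1
    simp [z, Complex.ext_iff]
    norm_num
  have hsin : sin (π * z) = Real.cosh (π * t) := by
    rw [show (π : ℂ) * z = π / 2 - (-(π * t * I)) by simp only [z]; ring,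
      sin_pi_div_two_sub, cos_neg, cos_mul_I, ofReal_cosh, ofReal_mul]
  have := Gamma_mul_Gamma_one_sub z
  rw [hconj, mul_conj, hsin, ← ofReal_div] at this
  rw [Complex.sq_norm]
  exact_mod_cast this

theorem log_norm_Gamma_one_half_add_mul_I_add_nat_sq (t : ℝ) (n : ℕ) :
    log (‖Complex.Gamma (1 / 2 + t * Complex.I + n)‖ ^ 2)
      = log π - log (cosh (π * t)) + ∑ j ∈ Finset.range n, log ((j + 1 / 2) ^ 2 + t ^ 2) := by
  have hz : ∀ j : ℕ, 1 / 2 + t * Complex.I + j ≠ 0 := fun j h => by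
    have := congrArg Complex.re h
    norm_num at this
    linarith [(j.cast_nonneg : (0 : ℝ) ≤ j)]
  have hfactor : ∀ j : ℕ, ‖1 / 2 + t * Complex.I + j‖ ^ 2 = (j + 1 / 2) ^ 2 + t ^ 2 :=
      fun j => by
    rw [Complex.sq_norm, Complex.normSq_apply]
    simp
    ring
  have hpos : ∀ j ∈ Finset.range n, ((j : ℝ) + 1 / 2) ^ 2 + t ^ 2 ≠ 0 :=
    fun j _ => by positivity
  rw [Complex.Gamma_add_nat_eq_mul_prod hz, norm_mul, mul_pow,
    Complex.norm_Gamma_one_half_add_mul_I_sq, norm_prod, ← Finset.prod_pow,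
    Finset.prod_congr rfl (fun j _ => hfactor j),
    log_mul (by positivity) (Finset.prod_ne_zero_iff.mpr hpos),
    log_div pi_ne_zero (by positivity), log_prod hpos]

/-- Uniform Stirling expansion for the Gamma factor appearing in Watson's formula. -/
theorem stirling_gamma_factor :
    ∃ C : ℝ, 0 < C ∧ ∀ (k : ℤ), 12 ≤ k → ∀ t : ℝ,
      |Real.log (‖Complex.Gamma ((k : ℂ) - 1/2 + t * Complex.I)‖^2)
        - ((k : ℝ) - 1) * Real.log (((k : ℝ) - 1/2)^2 + t^2)
        + 2 * t * Real.arctan (t / ((k : ℝ) - 1/2))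
        + 2 * (k : ℝ)| ≤ C := by
  refine ⟨20, by norm_num, fun k hk t => ?_⟩
  obtain ⟨n, rfl⟩ : ∃ n : ℕ, k = n + 1 := ⟨(k - 1).toNat, by omega⟩
  have hn : (1 : ℝ) ≤ n := by exact_mod_cast (show 1 ≤ n by omega)
  rw [show ((n + 1 : ℤ) : ℂ) - 1 / 2 + t * Complex.I = 1 / 2 + t * Complex.I + n by
      push_cast; ring, log_norm_Gamma_one_half_add_mul_I_add_nat_sq]
  push_cast
  rw [show (n : ℝ) + 1 - 1 / 2 = n + 1 / 2 by ring]
  have hsum := abs_sum_log_sub_logSqAddSqPrimitive_le t n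
  have hlog := abs_mul_log_sq_add_sq_sub_log_le t hn
  have harctan_sub := abs_mul_arctan_div_sub_arctan_div_le t n (n + 1 / 2)
  rw [show (n : ℝ) - (n + 1 / 2) = -(1 / 2) by ring, abs_neg,
    abs_of_pos (one_half_pos (α := ℝ))] at harctan_sub
  have harctan_add := mul_arctan_div_add_mul_arctan_div (by positivity : (0 : ℝ) < n + 1 / 2) t
  have hcosh := abs_sub_log_cosh_mem_Icc (π * t)
  rw [abs_mul, abs_of_pos pi_pos] at hcosh
  have hπ : log π ≤ 3 := by linarith [log_le_sub_one_of_pos pi_pos, pi_lt_four]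
  have hπ' : 0 ≤ log π := log_nonneg (by linarith [pi_gt_three])
  unfold logSqAddSqPrimitive at hsum
  rw [abs_le] at hsum hlog harctan_sub ⊢
  constructor <;> linarith [hcosh.1, hcosh.2, log_two_lt_d9]
end

section
/- There is an absolute constant C > 0 such that for every integer k ≥ 12 and every real number t with |t| ≥ 100k, one has |Γ(k − 1/2 + it)| / Γ(k) ≤ C·exp(−|t|/2). -/
/-!
On the line `Re s = 1/2` the reflection formula gives `|Γ(1/2 + it)|² = π / cosh(πt) ≤ 2π e^{-π|t|}`.
Writing `k = n + 1`, the functional equation gives `Γ(n + 1/2 + it) = ∏_{j<n} (1/2 + it + j) · Γ(1/2 + it)`,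
and the product has modulus at most `(n + 1/2 + |t|)ⁿ ≤ n! e^{n + 1/2 + |t|}`. As `n + 1/2 ≤ |t|/100`
and `π/2 - 1 - 1/100 > 1/2`, the exponentials combine to at most `e^{-|t|/2}`.
-/

open Complex Real ComplexConjugate Nat

open Finset in
theorem Complex.Gamma_add_nat_eq_prod_mul_Gamma {z : ℂ} (hz : ∀ m : ℕ, z ≠ -m) (n : ℕ) :
    Gamma (z + n) = (∏ j ∈ range n, (z + j)) * Gamma z := by
  induction n with
  | zero => simp
  | succ n ih =>
    have hzn : z + n ≠ 0 := fun h => hz n (eq_neg_of_add_eq_zero_left h)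
    rw [Nat.cast_succ, ← add_assoc, Gamma_add_one _ hzn, ih, prod_range_succ]
    ring

open Finset in
theorem Complex.norm_prod_range_add_natCast_le (z : ℂ) (n : ℕ) :
    ‖∏ j ∈ range n, (z + j)‖ ≤ (‖z‖ + n) ^ n := by
  calc ‖∏ j ∈ range n, (z + j)‖ = ∏ j ∈ range n, ‖z + j‖ := norm_prod _ _
    _ ≤ ∏ _j ∈ range n, (‖z‖ + n) := by
        refine prod_le_prod (fun _ _ => norm_nonneg _) fun j hj => ?_
        calc ‖z + j‖ ≤ ‖z‖ + j := by simpa using norm_add_le z j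
          _ ≤ ‖z‖ + n := by gcongr; exact_mod_cast (mem_range.mp hj).le
    _ = (‖z‖ + n) ^ n := by rw [prod_const, card_range]

theorem Complex.norm_Gamma_half_add_mul_I_sq (t : ℝ) :
    ‖Gamma (1/2 + t * I)‖ ^ 2 = π / Real.cosh (π * t) := by
  have hconj : 1 - (1/2 + t * I) = conj (1/2 + t * I) := by norm_num [Complex.ext_iff]
  have hsin : Complex.sin (π * (1/2 + t * I)) = Real.cosh (π * t) := by
    rw [show (π : ℂ) * (1/2 + t * I) = (π * t : ℝ) * I + π / 2 by push_cast; ring,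
      Complex.sin_add_pi_div_two, Complex.cos_mul_I, Complex.ofReal_cosh]
  have h := Gamma_mul_Gamma_one_sub (1/2 + t * I)
  rw [hconj, Gamma_conj, mul_conj, hsin] at h
  rw [← normSq_eq_norm_sq]
  exact_mod_cast h

theorem Complex.norm_Gamma_half_add_mul_I_le (t : ℝ) :
    ‖Gamma (1/2 + t * I)‖ ≤ √(2 * π) * Real.exp (-(π * |t|) / 2) := by
  have hcosh : 1 ≤ 2 * Real.exp (-(π * |t|)) * Real.cosh (π * t) := by
    rw [Real.cosh_eq, ← abs_of_pos pi_pos, ← abs_mul, abs_of_pos pi_pos]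
    calc (1 : ℝ) = Real.exp (-|π * t|) * Real.exp |π * t| := by rw [← Real.exp_add]; simp
      _ ≤ 2 * Real.exp (-|π * t|) * ((Real.exp (π * t) + Real.exp (-(π * t))) / 2) := by
          rw [show ∀ x y : ℝ, 2 * x * (y / 2) = x * y from fun x y => by ring]
          gcongr
          exact Real.exp_abs_le _
  have hsq : ‖Gamma (1/2 + t * I)‖ ^ 2 ≤ (√(2 * π) * Real.exp (-(π * |t|) / 2)) ^ 2 := by
    rw [norm_Gamma_half_add_mul_I_sq, mul_pow, sq_sqrt (by positivity), ← Real.exp_nat_mul,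
      div_le_iff₀ (Real.cosh_pos _)]
    push_cast
    rw [mul_div_cancel₀ _ two_ne_zero]
    nlinarith [pi_pos]
  exact le_of_sq_le_sq hsq (by positivity)

theorem Complex.norm_Gamma_nat_add_half_add_mul_I_le (n : ℕ) (t : ℝ) :
    ‖Gamma (n + 1/2 + t * I)‖ ≤
      n ! * √(2 * π) * Real.exp (n + 1/2 + |t| - π * |t| / 2) := by
  set z : ℂ := 1/2 + t * I
  have hz : ∀ m : ℕ, z ≠ -m := fun m h => by
    have hre : (1/2 : ℝ) = -m := by simpa [z] using congrArg re h
    linarith [(m.cast_nonneg : (0 : ℝ) ≤ m)]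
  have hnorm : ‖z‖ ≤ 1/2 + |t| := by
    simpa [z] using norm_add_le (1/2 : ℂ) (t * I)
  have hexp : (‖z‖ + n) ^ n ≤ n ! * Real.exp (n + 1/2 + |t|) := by
    rw [← div_le_iff₀' (by positivity)]
    exact (pow_div_factorial_le_exp (x := ‖z‖ + n) (by positivity) n).trans
      (Real.exp_le_exp.mpr (by linarith))
  calc ‖Gamma (n + 1/2 + t * I)‖ = ‖∏ j ∈ Finset.range n, (z + j)‖ * ‖Gamma z‖ := by
        rw [show (n : ℂ) + 1/2 + t * I = z + n by ring, Gamma_add_nat_eq_prod_mul_Gamma hz,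
          norm_mul]
    _ ≤ (n ! * Real.exp (n + 1/2 + |t|)) * (√(2 * π) * Real.exp (-(π * |t|) / 2)) := by
        gcongr
        · exact (norm_prod_range_add_natCast_le z n).trans hexp
        · exact norm_Gamma_half_add_mul_I_le t
    _ = n ! * √(2 * π) * Real.exp (n + 1/2 + |t| - π * |t| / 2) := by
        rw [mul_mul_mul_comm, ← Real.exp_add]; ring_nf

/-- Exponential decay of the Gamma ratio for very large `t`: for `|t| ≥ 100 k`,
`|Γ(k − 1/2 + it)| / Γ(k) ≤ C exp(−|t|/2)`. -/
theorem gamma_ratio_large_t :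
    ∃ C : ℝ, 0 < C ∧ ∀ (k : ℤ), 12 ≤ k → ∀ t : ℝ, 100 * (k : ℝ) ≤ |t| →
      ‖Complex.Gamma ((k : ℂ) - 1/2 + t * Complex.I)‖ / Real.Gamma (k : ℝ)
        ≤ C * Real.exp (-|t| / 2) := by
  refine ⟨√(2 * π), by positivity, fun k hk t ht => ?_⟩
  obtain ⟨n, rfl⟩ : ∃ n : ℕ, k = n + 1 := ⟨(k - 1).toNat, by omega⟩
  push_cast at ht ⊢
  rw [Real.Gamma_nat_eq_factorial, div_le_iff₀ (by positivity),
    show (n : ℂ) + 1 - 1/2 = n + 1/2 by ring]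
  calc _ ≤ n ! * √(2 * π) * Real.exp (n + 1/2 + |t| - π * |t| / 2) :=
        norm_Gamma_nat_add_half_add_mul_I_le n t
    _ ≤ √(2 * π) * Real.exp (-|t| / 2) * n ! := by
        rw [mul_comm _ (n ! : ℝ), ← mul_assoc]
        gcongr
        nlinarith [pi_gt_d2, Nat.cast_nonneg (α := ℝ) n]
end

section
/- There is an absolute constant C > 0 such that for every integer k ≥ 12 and every real number t with |t| ≥ k^{2/3}, one has |Γ(k − 1/2 + it)| / Γ(k) ≤ C·exp(−k^{1/3}/4). -/
open Complex Real

/-!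
Shifting `z = σ + it` by `M` and comparing `|Γ(z + M)|` with `Γ(σ + M)` through the Euler integral gives
`|Γ(σ + it)| / Γ(σ) ≤ ∏_{n < M} (σ + n) / |σ + n + it|`. When `s ≤ t²` and `s ≤ σ²`, the logarithm of the
`n`-th factor is at most `-(s/4) (1/(σ+n) - 1/(σ+n+1))`, so the product telescopes and, as `M → ∞`,
`|Γ(σ + it)| ≤ Γ(σ) exp(-s/(4σ))`. For `σ = k - 1/2` and `s = k^{4/3}` this is the claim with `C = 1`,
since `Γ` is increasing on `[2, ∞)`.
-/

open Finset Filter Topology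

lemma Complex.Gamma_add_nat_eq_prod_mul {z : ℂ} (hz : 0 < z.re) (M : ℕ) :
    Complex.Gamma (z + M) = (∏ n ∈ range M, (z + n)) * Complex.Gamma z := by
  induction M with
  | zero => simp
  | succ m ih =>
    have hzm : z + m ≠ 0 :=
      ne_of_apply_ne re (by simp only [add_re, natCast_re, zero_re]; positivity)
    rw [Nat.cast_succ, ← add_assoc, Complex.Gamma_add_one _ hzm, ih, prod_range_succ]
    ring

lemma Real.Gamma_add_nat_eq_prod_mul {x : ℝ} (hx : 0 < x) (M : ℕ) :
    Real.Gamma (x + M) = (∏ n ∈ range M, (x + n)) * Real.Gamma x := by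
  induction M with
  | zero => simp
  | succ m ih =>
    rw [Nat.cast_succ, ← add_assoc, Real.Gamma_add_one (by positivity), ih, prod_range_succ]
    ring

lemma Complex.norm_Gamma_le_Gamma_re {z : ℂ} (hz : 0 < z.re) :
    ‖Complex.Gamma z‖ ≤ Real.Gamma z.re := by
  rw [Complex.Gamma_eq_integral hz, Real.Gamma_eq_integral hz, Complex.GammaIntegral]
  refine (MeasureTheory.norm_integral_le_integral_norm _).trans_eq ?_
  refine MeasureTheory.setIntegral_congr_fun measurableSet_Ioi fun x hx => ?_
  rw [norm_mul, Complex.norm_real, Real.norm_of_nonneg (Real.exp_pos _).le,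
    Complex.norm_cpow_eq_rpow_re_of_pos hx]
  simp

lemma norm_Gamma_mul_prod_le {σ : ℝ} (hσ : 0 < σ) (t : ℝ) (M : ℕ) :
    ‖Complex.Gamma (σ + t * I)‖ * ∏ n ∈ range M, √((σ + n) ^ 2 + t ^ 2)
      ≤ Real.Gamma σ * ∏ n ∈ range M, (σ + n) := by
  have hre : 0 < ((σ : ℂ) + t * I).re := by simpa using hσ
  have hnorm (n : ℕ) : ‖(σ + t * I : ℂ) + n‖ = √((σ + n) ^ 2 + t ^ 2) := by
    rw [← norm_add_mul_I]; push_cast; ring_nf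
  calc _ = ‖Complex.Gamma ((σ + t * I) + M)‖ := by
        rw [Complex.Gamma_add_nat_eq_prod_mul hre, norm_mul, norm_prod]
        simp only [hnorm]
        ring
    _ ≤ Real.Gamma (σ + M) := by
        simpa using Complex.norm_Gamma_le_Gamma_re (z := σ + t * I + M) (by simp; positivity)
    _ = _ := by rw [Real.Gamma_add_nat_eq_prod_mul hσ, mul_comm]

lemma div_sqrt_sq_add_sq_le_exp {x y s : ℝ} (hx : 0 < x) (hsx : s ≤ x ^ 2) (hsy : s ≤ y ^ 2) :
    x / √(x ^ 2 + y ^ 2) ≤ Real.exp (-(s / 4) * (1 / x - 1 / (x + 1))) := by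
  set r := x / √(x ^ 2 + y ^ 2)
  have hr : 0 < r := by positivity
  have hr2 : r ^ 2 = x ^ 2 / (x ^ 2 + y ^ 2) := by rw [div_pow, sq_sqrt (by positivity)]
  have hlog : 2 * Real.log r ≤ -(s / 2) * (1 / x - 1 / (x + 1)) :=
    calc 2 * Real.log r = Real.log (r ^ 2) := by rw [Real.log_pow]; norm_num
      _ ≤ r ^ 2 - 1 := Real.log_le_sub_one_of_pos (by positivity)
      _ = -(y ^ 2 / (x ^ 2 + y ^ 2)) := by rw [hr2]; field_simp; ring
      _ ≤ -(s / 2) * (1 / x - 1 / (x + 1)) := by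
        have hxy : 0 < x ^ 2 + y ^ 2 := by positivity
        have hdiff : 1 / x - 1 / (x + 1) = 1 / (x * (x + 1)) := by field_simp; ring
        rw [hdiff, neg_mul, neg_le_neg_iff, div_mul_div_comm, mul_one,
          div_le_div_iff₀ (by positivity) hxy]
        nlinarith [mul_le_mul_of_nonneg_right hsy (sq_nonneg x),
          mul_le_mul_of_nonneg_right hsx (sq_nonneg y), mul_nonneg hx.le (sq_nonneg y)]
  calc r = Real.exp (Real.log r) := (Real.exp_log hr).symm
    _ ≤ _ := Real.exp_le_exp.mpr (by linarith)

lemma prod_div_sqrt_le_exp {σ s t : ℝ} (hσ : 0 < σ) (hsσ : s ≤ σ ^ 2) (hst : s ≤ t ^ 2) (M : ℕ) :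
    ∏ n ∈ range M, (σ + n) / √((σ + n) ^ 2 + t ^ 2)
      ≤ Real.exp (-(s / 4) * (1 / σ - 1 / (σ + M))) := by
  have htel : 1 / σ - 1 / (σ + M) = ∑ n ∈ range M, (1 / (σ + n) - 1 / (σ + n + 1)) := by
    have := sum_range_sub' (fun n : ℕ => 1 / (σ + n)) M
    push_cast [add_zero, ← add_assoc] at this
    exact this.symm
  rw [htel, mul_sum, Real.exp_sum]
  exact prod_le_prod (fun n _ => by positivity) fun n _ =>
    div_sqrt_sq_add_sq_le_exp (by positivity)
      (hsσ.trans (pow_le_pow_left₀ hσ.le (by simp) 2)) hst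

lemma norm_Gamma_le_Gamma_mul_exp {σ s t : ℝ} (hσ : 0 < σ) (hsσ : s ≤ σ ^ 2) (hst : s ≤ t ^ 2) :
    ‖Complex.Gamma (σ + t * I)‖ ≤ Real.Gamma σ * Real.exp (-s / (4 * σ)) := by
  have hbound (M : ℕ) : ‖Complex.Gamma (σ + t * I)‖
      ≤ Real.Gamma σ * Real.exp (-(s / 4) * (1 / σ - 1 / (σ + M))) := by
    have hP : 0 < ∏ n ∈ range M, √((σ + n) ^ 2 + t ^ 2) := prod_pos fun n _ => by positivity
    calc ‖Complex.Gamma (σ + t * I)‖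
        = ‖Complex.Gamma (σ + t * I)‖ * (∏ n ∈ range M, √((σ + n) ^ 2 + t ^ 2))
          / ∏ n ∈ range M, √((σ + n) ^ 2 + t ^ 2) := by field_simp
      _ ≤ Real.Gamma σ * (∏ n ∈ range M, (σ + n)) / ∏ n ∈ range M, √((σ + n) ^ 2 + t ^ 2) :=
        div_le_div_of_nonneg_right (norm_Gamma_mul_prod_le hσ t M) hP.le
      _ = Real.Gamma σ * ∏ n ∈ range M, (σ + n) / √((σ + n) ^ 2 + t ^ 2) := by
        rw [prod_div_distrib, mul_div_assoc]
      _ ≤ _ := mul_le_mul_of_nonneg_left (prod_div_sqrt_le_exp hσ hsσ hst M)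
        (Real.Gamma_pos_of_pos hσ).le
  have hinv : Tendsto (fun M : ℕ => 1 / (σ + M)) atTop (𝓝 0) :=
    tendsto_const_nhds.div_atTop (tendsto_atTop_add_const_left _ σ tendsto_natCast_atTop_atTop)
  have hlim : Tendsto (fun M : ℕ => Real.Gamma σ * Real.exp (-(s / 4) * (1 / σ - 1 / (σ + M))))
      atTop (𝓝 (Real.Gamma σ * Real.exp (-s / (4 * σ)))) := by
    convert (((hinv.const_sub (1 / σ)).const_mul (-(s / 4))).rexp).const_mul (Real.Gamma σ)
      using 3
    rw [sub_zero, neg_div, neg_mul, div_mul_div_comm, mul_one]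
  exact ge_of_tendsto' hlim hbound

/-- For `|t| ≥ k^{2/3}`, one has `|Γ(k − 1/2 + it)| / Γ(k) ≤ C exp(−k^{1/3}/4)`. -/
theorem gamma_ratio_medium_t :
    ∃ C : ℝ, 0 < C ∧ ∀ (k : ℤ), 12 ≤ k → ∀ t : ℝ, (k : ℝ) ^ ((2 : ℝ)/3) ≤ |t| →
      ‖Complex.Gamma ((k : ℂ) - 1/2 + t * Complex.I)‖ / Real.Gamma (k : ℝ)
        ≤ C * Real.exp (-(k : ℝ) ^ ((1 : ℝ)/3) / 4) := by
  refine ⟨1, one_pos, fun k hk t ht => ?_⟩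
  have hk12 : (12 : ℝ) ≤ k := by exact_mod_cast hk
  set p := (k : ℝ) ^ ((1 : ℝ) / 3)
  have hp3 : p ^ 3 = k := by rw [← rpow_natCast, ← rpow_mul (by linarith)]; norm_num
  have hp2 : p ^ 2 = (k : ℝ) ^ ((2 : ℝ) / 3) := by
    rw [← rpow_natCast, ← rpow_mul (by linarith)]; norm_num
  have hp : 2 ≤ p := le_of_pow_le_pow_left₀ three_ne_zero (by positivity) (by linarith)
  have hσ : 0 < (k : ℝ) - 1 / 2 := by linarith
  have hsσ : p ^ 4 ≤ ((k : ℝ) - 1 / 2) ^ 2 := by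
    have hp4 : 4 * p ^ 4 ≤ p ^ 2 * p ^ 4 :=
      mul_le_mul_of_nonneg_right (by nlinarith) (by positivity)
    rw [← hp3]; nlinarith [pow_pos (by linarith : 0 < p) 3]
  have hst : p ^ 4 ≤ t ^ 2 := by
    rw [← sq_abs t, show p ^ 4 = (p ^ 2) ^ 2 by ring]
    exact pow_le_pow_left₀ (by positivity) (hp2 ▸ ht) 2
  have hmono : Real.Gamma ((k : ℝ) - 1 / 2) ≤ Real.Gamma k :=
    Real.Gamma_strictMonoOn_Ici.monotoneOn (by simp only [Set.mem_Ici]; linarith)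
      (by simp only [Set.mem_Ici]; linarith) (by linarith)
  have hexp : -p ^ 4 / (4 * ((k : ℝ) - 1 / 2)) ≤ -p / 4 := by
    rw [div_le_div_iff₀ (by positivity) (by norm_num), ← hp3]
    nlinarith [pow_pos (by linarith : 0 < p) 4]
  have hz : (k : ℂ) - 1 / 2 + t * I = (((k : ℝ) - 1 / 2 : ℝ) : ℂ) + t * I := by push_cast; ring
  rw [hz, one_mul, div_le_iff₀ (Real.Gamma_pos_of_pos (by linarith))]
  calc _ ≤ Real.Gamma ((k : ℝ) - 1 / 2) * Real.exp (-p ^ 4 / (4 * ((k : ℝ) - 1 / 2))) :=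
        norm_Gamma_le_Gamma_mul_exp hσ hsσ hst
    _ ≤ Real.Gamma k * Real.exp (-p / 4) := by gcongr
    _ = _ := mul_comm _ _
end

section
/- There is an absolute constant C > 0 such that for every integer k ≥ 12 and every real number t with |t| ≤ k^{2/3}, one has |log(|Γ(k − 1/2 + it)|² / Γ(k)²) + t²/k + log k| ≤ C. -/
/-!
By Euler's limit formula `Γ(s) = lim n^s n! / ∏_{j ≤ n} (s + j)`, for `σ > 0` the factors
`n^σ n!` cancel in `Γ(σ)² / |Γ(σ + it)|²`, which is therefore the infinite product
`∏_{j ≥ 0} (1 + t²/(σ+j)²)`. Taking `σ = k - 1/2`, bounding `log (1 + x)` between `x - x²/2` and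
`x` and comparing `1/(σ+j)²` with telescoping differences gives
`log (Γ(σ)² / |Γ(σ + it)|²) = t²/k + O(t²/k² + t⁴/k³)`, which is `t²/k + O(1)` when
`|t| ≤ k^{2/3}`. Log-convexity of `Γ` on `[k-1, k]` and `[k-1/2, k+1/2]` gives
`Γ(k-1/2)²/Γ(k)² ∈ [1/(k-1/2), 1/(k-1)]`, which accounts for the `log k`.
-/

open Complex Real Filter Finset Topology

open scoped Nat

namespace Real

lemma sub_sq_div_two_le_log_one_add {x : ℝ} (hx : 0 ≤ x) : x - x ^ 2 / 2 ≤ log (1 + x) := by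
  refine le_trans ?_ (le_log_one_add_of_nonneg hx)
  rw [le_div_iff₀ (by linarith)]
  nlinarith [pow_nonneg hx 3]

lemma log_one_add_le_self {x : ℝ} (hx : 0 ≤ x) : log (1 + x) ≤ x := by
  linarith [log_le_sub_one_of_pos (show 0 < 1 + x by linarith)]

lemma Gamma_midpoint_sq_le {s t : ℝ} (hs : 0 < s) (ht : 0 < t) :
    Gamma ((s + t) / 2) ^ 2 ≤ Gamma s * Gamma t := by
  have h := Gamma_mul_add_mul_le_rpow_Gamma_mul_rpow_Gamma hs ht (a := 1 / 2) (b := 1 / 2)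
    (by norm_num) (by norm_num) (by norm_num)
  rw [← sqrt_eq_rpow, ← sqrt_eq_rpow, show 1 / 2 * s + 1 / 2 * t = (s + t) / 2 by ring] at h
  calc Gamma ((s + t) / 2) ^ 2 ≤ (√(Gamma s) * √(Gamma t)) ^ 2 := by gcongr
    _ = Gamma s * Gamma t := by
      rw [mul_pow, sq_sqrt (Gamma_pos_of_pos hs).le, sq_sqrt (Gamma_pos_of_pos ht).le]

lemma Gamma_sq_le_mul_Gamma_sub_half_sq {x : ℝ} (hx : 1 / 2 < x) :
    Gamma x ^ 2 ≤ (x - 1 / 2) * Gamma (x - 1 / 2) ^ 2 := by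
  have h := Gamma_midpoint_sq_le (s := x - 1 / 2) (t := x + 1 / 2) (by linarith) (by linarith)
  rw [show x + 1 / 2 = x - 1 / 2 + 1 by ring, Gamma_add_one (by linarith),
    show (x - 1 / 2 + (x - 1 / 2 + 1)) / 2 = x by ring] at h
  linear_combination h

lemma mul_Gamma_sub_half_sq_le_Gamma_sq {x : ℝ} (hx : 1 < x) :
    (x - 1) * Gamma (x - 1 / 2) ^ 2 ≤ Gamma x ^ 2 := by
  have h := Gamma_midpoint_sq_le (s := x - 1) (t := x) (by linarith) (by linarith)
  have hrec : Gamma x = (x - 1) * Gamma (x - 1) := by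
    simpa using Gamma_add_one (s := x - 1) (by linarith)
  rw [show (x - 1 + x) / 2 = x - 1 / 2 by ring] at h
  calc (x - 1) * Gamma (x - 1 / 2) ^ 2 ≤ (x - 1) * (Gamma (x - 1) * Gamma x) := by gcongr
    _ = Gamma x ^ 2 := by rw [hrec]; ring

lemma log_mul_Gamma_sub_half_sq_div_Gamma_sq_mem_Icc {x : ℝ} (hx : 2 ≤ x) :
    log (x * Gamma (x - 1 / 2) ^ 2 / Gamma x ^ 2) ∈ Set.Icc 0 1 := by
  have hΓ : 0 < Gamma x ^ 2 := by have := Gamma_pos_of_pos (by linarith : 0 < x); positivity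
  have hΓ' := Gamma_pos_of_pos (by linarith : 0 < x - 1 / 2)
  have hlow := Gamma_sq_le_mul_Gamma_sub_half_sq (x := x) (by linarith)
  have hup := mul_Gamma_sub_half_sq_le_Gamma_sq (x := x) (by linarith)
  constructor
  · refine log_nonneg ?_
    rw [le_div_iff₀ hΓ]
    nlinarith
  · refine (log_le_sub_one_of_pos (by positivity)).trans ?_
    rw [sub_le_iff_le_add, div_le_iff₀ hΓ]
    nlinarith

end Real

lemma inv_sub_inv_add_one_eq {u : ℝ} (hu : 0 < u) : u⁻¹ - (u + 1)⁻¹ = (u * (u + 1))⁻¹ := by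
  rw [inv_sub_inv hu.ne' (by linarith), add_sub_cancel_left, one_div]

lemma inv_sq_le_inv_sub_half_sub_inv_add_half {y : ℝ} (hy : 1 / 2 < y) :
    (y ^ 2)⁻¹ ≤ (y - 1 / 2)⁻¹ - (y - 1 / 2 + 1)⁻¹ := by
  rw [inv_sub_inv_add_one_eq (by linarith)]
  exact inv_anti₀ (by nlinarith) (by nlinarith)

lemma inv_sub_inv_add_one_le_inv_sq {y : ℝ} (hy : 0 < y) : y⁻¹ - (y + 1)⁻¹ ≤ (y ^ 2)⁻¹ := by
  rw [inv_sub_inv_add_one_eq hy]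
  exact inv_anti₀ (by positivity) (by nlinarith)

lemma hasSum_inv_add_sub_inv_add_succ {a : ℝ} (ha : 0 < a) :
    HasSum (fun j : ℕ => (a + j)⁻¹ - (a + (j + 1 : ℕ))⁻¹) a⁻¹ := by
  have hanti : ∀ j : ℕ, (a + (j + 1 : ℕ))⁻¹ ≤ (a + j)⁻¹ := fun j =>
    inv_anti₀ (by positivity) (by push_cast; linarith)
  rw [hasSum_iff_tendsto_nat_of_nonneg (fun j => sub_nonneg.2 (hanti j))]
  simp_rw [sum_range_sub' fun j : ℕ => (a + j)⁻¹]
  have h0 : Tendsto (fun n : ℕ => (a + n)⁻¹) atTop (𝓝 0) :=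
    tendsto_inv_atTop_zero.comp (tendsto_atTop_add_const_left _ a tendsto_natCast_atTop_atTop)
  simpa using (tendsto_const_nhds (x := a⁻¹)).sub h0

lemma GammaSeq_sq_div_norm_GammaSeq_sq {σ : ℝ} (hσ : 0 < σ) (t : ℝ) {n : ℕ} (hn : 0 < n) :
    Real.GammaSeq σ n ^ 2 / ‖Complex.GammaSeq (σ + t * I) n‖ ^ 2
      = ∏ j ∈ range (n + 1), (1 + (t / (σ + j)) ^ 2) := by
  have hnorm : ∀ j : ℕ, ‖(σ : ℂ) + t * I + j‖ ^ 2 = (σ + j) ^ 2 + t ^ 2 := fun j => by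
    rw [show (σ : ℂ) + t * I + j = ((σ + j : ℝ) : ℂ) + t * I by push_cast; ring,
      Complex.sq_norm, normSq_add_mul_I]
  rw [Real.GammaSeq, Complex.GammaSeq, norm_div, norm_mul, norm_natCast_cpow_of_pos hn, norm_prod]
  simp only [add_re, ofReal_re, mul_re, I_re, mul_zero, ofReal_im, I_im, mul_one, sub_self,
    add_zero, Complex.norm_natCast, div_pow, mul_pow, ← prod_pow, hnorm]
  rw [div_div_div_cancel_left' _ _ (by positivity), ← prod_div_distrib]
  refine prod_congr rfl fun j _ => ?_
  have : 0 < σ + j := by positivity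
  field_simp

lemma hasSum_log_one_add_sq_div {σ : ℝ} (hσ : 0 < σ) (t : ℝ) :
    HasSum (fun j : ℕ => Real.log (1 + (t / (σ + j)) ^ 2))
      (Real.log (Real.Gamma σ ^ 2 / ‖Complex.Gamma (σ + t * I)‖ ^ 2)) := by
  have hΓ : ‖Complex.Gamma (σ + t * I)‖ ≠ 0 :=
    norm_ne_zero_iff.2 (Complex.Gamma_ne_zero_of_re_pos (by simpa using hσ))
  have hquot : Tendsto (fun n => Real.GammaSeq σ n ^ 2 / ‖Complex.GammaSeq (σ + t * I) n‖ ^ 2)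
      atTop (𝓝 (Real.Gamma σ ^ 2 / ‖Complex.Gamma (σ + t * I)‖ ^ 2)) :=
    ((Real.GammaSeq_tendsto_Gamma σ).pow 2).div
      ((Complex.GammaSeq_tendsto_Gamma _).norm.pow 2) (pow_ne_zero 2 hΓ)
  have hprod : Tendsto (fun n => ∏ j ∈ range (n + 1), (1 + (t / (σ + j)) ^ 2))
      atTop (𝓝 (Real.Gamma σ ^ 2 / ‖Complex.Gamma (σ + t * I)‖ ^ 2)) :=
    hquot.congr' <| (eventually_gt_atTop 0).mono fun n hn =>
      GammaSeq_sq_div_norm_GammaSeq_sq hσ t hn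
  have hlog := (Real.continuousAt_log (by positivity)).tendsto.comp hprod
  rw [hasSum_iff_tendsto_nat_of_nonneg
      (fun j => Real.log_nonneg (le_add_of_nonneg_right (sq_nonneg _))),
    ← tendsto_add_atTop_iff_nat 1]
  exact hlog.congr fun n => Real.log_prod fun j _ => by positivity

lemma log_Gamma_sq_div_norm_Gamma_sq_le {σ : ℝ} (hσ : 1 / 2 < σ) (t : ℝ) :
    Real.log (Real.Gamma σ ^ 2 / ‖Complex.Gamma (σ + t * I)‖ ^ 2) ≤ t ^ 2 / (σ - 1 / 2) := by
  have hg := (hasSum_inv_add_sub_inv_add_succ (a := σ - 1 / 2) (by linarith)).mul_left (t ^ 2)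
  rw [← div_eq_mul_inv] at hg
  refine hasSum_le (fun j => ?_) (hasSum_log_one_add_sq_div (by linarith) t) hg
  have hj := inv_sq_le_inv_sub_half_sub_inv_add_half (y := σ + j)
    (by linarith [j.cast_nonneg (α := ℝ)])
  calc Real.log (1 + (t / (σ + j)) ^ 2) ≤ (t / (σ + j)) ^ 2 :=
        Real.log_one_add_le_self (sq_nonneg _)
    _ = t ^ 2 * ((σ + j) ^ 2)⁻¹ := by rw [div_pow, div_eq_mul_inv]
    _ ≤ _ := by
      refine mul_le_mul_of_nonneg_left (hj.trans_eq ?_) (sq_nonneg t)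
      push_cast; ring_nf

lemma le_log_Gamma_sq_div_norm_Gamma_sq {σ : ℝ} (hσ : 1 / 2 < σ) (t : ℝ) :
    t ^ 2 / σ - t ^ 4 / (2 * σ ^ 2 * (σ - 1 / 2))
      ≤ Real.log (Real.Gamma σ ^ 2 / ‖Complex.Gamma (σ + t * I)‖ ^ 2) := by
  have hv := (hasSum_inv_add_sub_inv_add_succ (a := σ) (by linarith)).mul_left (t ^ 2)
  have hw := (hasSum_inv_add_sub_inv_add_succ (a := σ - 1 / 2) (by linarith)).mul_left
    (t ^ 4 / (2 * σ ^ 2))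
  have hval : t ^ 2 * σ⁻¹ - t ^ 4 / (2 * σ ^ 2) * (σ - 1 / 2)⁻¹
      = t ^ 2 / σ - t ^ 4 / (2 * σ ^ 2 * (σ - 1 / 2)) := by
    rw [← div_eq_mul_inv, ← div_eq_mul_inv, div_div]
  rw [← hval]
  refine hasSum_le (fun j => ?_) (hv.sub hw) (hasSum_log_one_add_sq_div (by linarith) t)
  have hσj : σ ≤ σ + j := by linarith [j.cast_nonneg (α := ℝ)]
  set s := ((σ + j) ^ 2)⁻¹
  have hx : (t / (σ + j)) ^ 2 = t ^ 2 * s := by rw [div_pow, div_eq_mul_inv]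
  have hv_j : (σ + j)⁻¹ - (σ + (j + 1 : ℕ))⁻¹ ≤ s := by
    simpa [add_assoc] using inv_sub_inv_add_one_le_inv_sq (y := σ + j) (by linarith)
  have hw_j : s ≤ (σ - 1 / 2 + j)⁻¹ - (σ - 1 / 2 + (j + 1 : ℕ))⁻¹ := by
    refine (inv_sq_le_inv_sub_half_sub_inv_add_half (y := σ + j) (by linarith)).trans_eq ?_
    push_cast; ring_nf
  have hs : s ≤ (σ ^ 2)⁻¹ := inv_anti₀ (by positivity) (by gcongr)
  have hsq : (t ^ 2 * s) ^ 2 / 2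
      ≤ t ^ 4 / (2 * σ ^ 2) * ((σ - 1 / 2 + j)⁻¹ - (σ - 1 / 2 + (j + 1 : ℕ))⁻¹) :=
    calc (t ^ 2 * s) ^ 2 / 2 = t ^ 4 / 2 * (s * s) := by ring
      _ ≤ t ^ 4 / 2 * ((σ ^ 2)⁻¹ * ((σ - 1 / 2 + j)⁻¹ - (σ - 1 / 2 + (j + 1 : ℕ))⁻¹)) := by
        gcongr
      _ = _ := by ring
  have hlog := Real.sub_sq_div_two_le_log_one_add (sq_nonneg (t / (σ + j)))
  rw [hx] at hlog ⊢
  nlinarith [mul_le_mul_of_nonneg_left hv_j (sq_nonneg t)]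

lemma sq_le_and_pow_four_le_of_abs_le_rpow_two_thirds {k t : ℝ} (hk : 8 ≤ k)
    (ht : |t| ≤ k ^ (2 / 3 : ℝ)) :
    t ^ 2 ≤ k * (k - 1) ∧ t ^ 4 ≤ 2 * (k - 1 / 2) ^ 2 * (k - 1) := by
  set u := k ^ (1 / 3 : ℝ)
  have hu3 : u ^ 3 = k := by
    rw [← Real.rpow_natCast, ← Real.rpow_mul (by linarith)]; norm_num
  have hu2 : k ^ (2 / 3 : ℝ) = u ^ 2 := by
    rw [← Real.rpow_natCast, ← Real.rpow_mul (by linarith)]; norm_num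
  have hu : 2 ≤ u := le_of_pow_le_pow_left₀ (n := 3) (by norm_num) (by positivity) (by linarith)
  have ht2 : t ^ 2 ≤ u ^ 4 := by
    rw [hu2] at ht
    calc t ^ 2 = |t| ^ 2 := (sq_abs t).symm
      _ ≤ (u ^ 2) ^ 2 := by gcongr
      _ = u ^ 4 := by ring
  have ht4 : t ^ 4 ≤ u ^ 8 := by
    calc t ^ 4 = (t ^ 2) ^ 2 := by ring
      _ ≤ (u ^ 4) ^ 2 := by gcongr
      _ = u ^ 8 := by ring
  have hu4 : u ^ 4 = u * u ^ 3 := by ring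
  have hu8 : u ^ 8 ≤ u ^ 3 / 2 * (u ^ 3) ^ 2 := by
    have : u ^ 2 ≤ u ^ 3 / 2 := by nlinarith
    calc u ^ 8 = u ^ 2 * (u ^ 3) ^ 2 := by ring
      _ ≤ u ^ 3 / 2 * (u ^ 3) ^ 2 := by gcongr
  have hu1 : u + 1 ≤ u ^ 3 := by nlinarith
  rw [← hu3]
  generalize u ^ 3 = v at hu1 hu4 hu8
  constructor <;> nlinarith

lemma abs_sq_div_sub_log_Gamma_sq_div_norm_Gamma_sq_le_one {k t : ℝ} (hk : 8 ≤ k)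
    (ht : |t| ≤ k ^ (2 / 3 : ℝ)) :
    |t ^ 2 / k
        - Real.log (Real.Gamma (k - 1 / 2) ^ 2 / ‖Complex.Gamma ((k - 1 / 2 : ℝ) + t * I)‖ ^ 2)|
      ≤ 1 := by
  obtain ⟨ht2, ht4⟩ := sq_le_and_pow_four_le_of_abs_le_rpow_two_thirds hk ht
  have hup := log_Gamma_sq_div_norm_Gamma_sq_le (σ := k - 1 / 2) (by linarith) t
  have hlow := le_log_Gamma_sq_div_norm_Gamma_sq (σ := k - 1 / 2) (by linarith) t
  rw [show k - 1 / 2 - 1 / 2 = k - 1 by ring] at hup hlow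
  have hsplit : t ^ 2 / (k - 1) = t ^ 2 / k + t ^ 2 / (k * (k - 1)) := by
    field_simp [show k - 1 ≠ 0 by linarith]; ring
  have h₁ : t ^ 2 / (k * (k - 1)) ≤ 1 := (div_le_one (by nlinarith)).2 ht2
  have h₂ : t ^ 2 / k ≤ t ^ 2 / (k - 1 / 2) :=
    div_le_div_of_nonneg_left (sq_nonneg t) (by linarith) (by linarith)
  have h₃ : t ^ 4 / (2 * (k - 1 / 2) ^ 2 * (k - 1)) ≤ 1 := (div_le_one (by nlinarith)).2 ht4
  rw [abs_le]
  constructor <;> linarith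

/-- For `|t| ≤ k^{2/3}`, `log(|Γ(k − 1/2 + it)|²/Γ(k)²) = −t²/k − log k + O(1)`. -/
theorem log_gamma_ratio_small_t :
    ∃ C : ℝ, 0 < C ∧ ∀ (k : ℤ), 12 ≤ k → ∀ t : ℝ, |t| ≤ (k : ℝ) ^ ((2 : ℝ)/3) →
      |Real.log ((‖Complex.Gamma ((k : ℂ) - 1/2 + t * Complex.I)‖)^2
          / (Real.Gamma (k : ℝ))^2)
        + t^2 / (k : ℝ) + Real.log (k : ℝ)| ≤ C := by
  refine ⟨2, two_pos, fun k hk t ht => ?_⟩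
  have hk' : (12 : ℝ) ≤ k := by exact_mod_cast hk
  have hz : (k : ℂ) - 1 / 2 + t * I = ((k - 1 / 2 : ℝ) : ℂ) + t * I := by push_cast; ring
  set A := ‖Complex.Gamma ((k - 1 / 2 : ℝ) + t * I)‖ ^ 2
  set B := Real.Gamma (k - 1 / 2) ^ 2
  set D := Real.Gamma k ^ 2
  have hA : 0 < A := by
    have := Complex.Gamma_ne_zero_of_re_pos (s := (k - 1 / 2 : ℝ) + t * I)
      (by simpa using (by linarith : (0 : ℝ) < k - 1 / 2))
    positivity
  have hB : 0 < B := by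
    have := Real.Gamma_pos_of_pos (by linarith : (0 : ℝ) < k - 1 / 2); positivity
  have hD : 0 < D := by have := Real.Gamma_pos_of_pos (by linarith : (0 : ℝ) < k); positivity
  have hsplit : Real.log (A / D) + t ^ 2 / k + Real.log k
      = Real.log (k * B / D) + (t ^ 2 / k - Real.log (B / A)) := by
    rw [Real.log_div hA.ne' hD.ne', Real.log_div (by positivity) hD.ne',
      Real.log_mul (by positivity) hB.ne', Real.log_div hB.ne' hA.ne']
    ring
  rw [hz, hsplit]
  obtain ⟨hΓ₀, hΓ₁⟩ := Real.log_mul_Gamma_sub_half_sq_div_Gamma_sq_mem_Icc (x := k) (by linarith)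
  have ht' := abs_le.1 (abs_sq_div_sub_log_Gamma_sq_div_norm_Gamma_sq_le_one (by linarith) ht)
  rw [abs_le]
  constructor <;> linarith
end

section
/- Let x be a complex number and a : ℕ → ℂ a sequence satisfying a(0) = 1, a(1) = x, and a(n+2) = x·a(n+1) − a(n) for all n ≥ 0. Then for every natural number m, x^{2m} = ∑_{l=0}^{m} [(2m)!·(2l+1) / ((m−l)!·(m+l+1)!)] · a(2l). -/
/-!
Mathlib's `Polynomial.Chebyshev.S n` (that is, `U n (X / 2)`, defined for all integers `n`) is
the unique solution of the Hecke recurrence, so `a n = S n (x)`. Because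
`X * S n = S (n + 1) + S (n - 1)` for every integer `n`, multiplying by `X` acts like multiplying
by `T + T⁻¹`, and the binomial theorem gives `X ^ N = ∑ C(N, k) S (2k - N)`. For `N = 2m` the
terms with `k < m` have negative index and fold onto those with `k > m` through
`S (-2l - 2) = -S (2l)`, leaving the ballot numbers
`C(2m, m + l) - C(2m, m + l + 1) = (2m)! (2l + 1) / ((m - l)! (m + l + 1)!)`.
-/

open Finset Nat Polynomial Polynomial.Chebyshev

theorem Nat.cast_choose_sub_choose_succ {K : Type*} [Field K] [CharZero K] {n k : ℕ}
    (h : k ≤ n) :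
    (n.choose k : K) - n.choose (k + 1) = n ! * (2 * k + 1 - n) / ((n - k)! * (k + 1)!) := by
  have hchoose_succ : (n.choose (k + 1) : K) = n.choose k * (n - k) / (k + 1) := by
    rw [eq_div_iff (Nat.cast_add_one_ne_zero k)]
    exact_mod_cast Nat.choose_succ_right_eq n k
  rw [hchoose_succ, Nat.cast_choose K h, Nat.factorial_succ, Nat.cast_mul]
  field_simp
  push_cast
  ring

namespace Polynomial.Chebyshev

variable {R : Type*} [CommRing R]

theorem eq_eval_S_of_recurrence {x : R} {a : ℕ → R} (h0 : a 0 = 1) (h1 : a 1 = x)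
    (hrec : ∀ n, a (n + 2) = x * a (n + 1) - a n) : ∀ n : ℕ, a n = (S R n).eval x
  | 0 => by simp [h0]
  | 1 => by simp [h1]
  | n + 2 => by
    rw [hrec, eq_eval_S_of_recurrence h0 h1 hrec n, eq_eval_S_of_recurrence h0 h1 hrec (n + 1)]
    push_cast
    simp [S_add_two]

theorem X_pow_eq_sum_choose_mul_S (n : ℕ) :
    (X : R[X]) ^ n = ∑ k ∈ range (n + 1), (n.choose k : R[X]) * S R (2 * k - n) := by
  induction n with
  | zero => simp [S_zero]
  | succ n ih =>
    have hXS (k : ℕ) : S R (2 * k - n) * X = S R (2 * k - n + 1) + S R (2 * k - n - 1) := by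
      rw [S_add_one]; ring
    have hshift (k : ℤ) : 2 * (k + 1) - n - 1 = 2 * k - n + 1 := by ring
    calc X ^ (n + 1)
        = ∑ k ∈ range (n + 1), (n.choose k : R[X]) * S R (2 * k - n + 1) +
            ∑ k ∈ range (n + 2), (n.choose k : R[X]) * S R (2 * k - n - 1) := by
          simp [pow_succ, ih, sum_mul, mul_assoc, hXS, mul_add, sum_add_distrib,
            sum_range_succ _ (n + 1)]
      _ = _ := by
          rw [sum_range_succ' _ (n + 1), sum_range_succ' _ (n + 1)]
          push_cast [Nat.choose_succ_succ', add_mul, sum_add_distrib, ← sub_sub, hshift,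
            Nat.choose_zero_right]
          ring

theorem X_pow_two_mul_eq_sum_choose_sub_choose_mul_S (m : ℕ) :
    (X : R[X]) ^ (2 * m) = ∑ l ∈ range (m + 1),
      (((2 * m).choose (m + l) : R[X]) - (2 * m).choose (m + l + 1)) * S R (2 * l) := by
  have upper : ∀ l ∈ range (m + 1),
      ((2 * m).choose (m + l) : R[X]) * S R (2 * (m + l : ℕ) - (2 * m : ℕ)) =
        (2 * m).choose (m + l) * S R (2 * l) := fun l _ => by
    congr 2; push_cast; ring
  have lower : ∑ j ∈ range m,
      ((2 * m).choose (m - 1 - j) : R[X]) * S R (2 * (m - 1 - j : ℕ) - (2 * m : ℕ)) =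
        -∑ l ∈ range (m + 1), ((2 * m).choose (m + l + 1) : R[X]) * S R (2 * l) := by
    rw [sum_range_succ, Nat.choose_eq_zero_of_lt (by omega : 2 * m < m + m + 1), Nat.cast_zero,
      zero_mul, add_zero, ← sum_neg_distrib]
    refine sum_congr rfl fun j hj => ?_
    have hj : j < m := mem_range.1 hj
    rw [Nat.choose_symm_of_eq_add (by omega : 2 * m = m - 1 - j + (m + j + 1)),
      show 2 * ((m - 1 - j : ℕ) : ℤ) - (2 * m : ℕ) = -(2 * j) - 2 by omega, S_neg_sub_two]
    ring
  rw [X_pow_eq_sum_choose_mul_S, show 2 * m + 1 = m + (m + 1) by ring, sum_range_add,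
    ← sum_range_reflect, lower, sum_congr rfl upper]
  simp only [sub_mul, sum_sub_distrib]
  ring

end Polynomial.Chebyshev

/-- Even-power linearization of Hecke eigenvalues: if `a(n)` satisfies the Hecke
relations at a prime (`a(0) = 1`, `a(1) = x`, `a(n+2) = x a(n+1) − a(n)`), then
`x^{2m} = ∑_{l=0}^{m} (2m)!(2l+1)/((m−l)!(m+l+1)!) · a(2l)`. -/
theorem hecke_even_power (x : ℂ) (a : ℕ → ℂ) (h0 : a 0 = 1) (h1 : a 1 = x)
    (hrec : ∀ n : ℕ, a (n + 2) = x * a (n + 1) - a n) (m : ℕ) :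
    x ^ (2 * m) = ∑ l ∈ Finset.range (m + 1),
      (((2 * m).factorial * (2 * l + 1) : ℂ) /
        ((m - l).factorial * (m + l + 1).factorial : ℂ)) * a (2 * l) := by
  have expansion := congrArg (eval x) (X_pow_two_mul_eq_sum_choose_sub_choose_mul_S (R := ℂ) m)
  simp only [eval_pow, eval_X, eval_finsetSum, eval_mul, eval_sub, eval_natCast] at expansion
  rw [expansion]
  refine sum_congr rfl fun l hl => ?_
  have hlm : l ≤ m := Nat.lt_succ_iff.1 (mem_range.1 hl)
  rw [eq_eval_S_of_recurrence h0 h1 hrec, Nat.cast_choose_sub_choose_succ (by omega),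
    show 2 * m - (m + l) = m - l by omega]
  push_cast
  ring
end

section
/- Let x be a complex number and a : ℕ → ℂ a sequence satisfying a(0) = 1, a(1) = x, and a(n+2) = x·a(n+1) − a(n) for all n ≥ 0. Then for every natural number m, x^{2m+1} = ∑_{l=0}^{m} [(2m+1)!·(2l+2) / ((m−l)!·(m+l+2)!)] · a(2l+1). -/
/-! Write `a(n) = S_n(x)`, the rescaled Chebyshev polynomials of the second kind, extended to all
`n : ℤ` by the same recurrence, so that `S_{-1} = 0` and `S_{-n-2} = -S_n`. Since
`x S_j = S_{j+1} + S_{j-1}` for every `j : ℤ`, multiplication by `x` acts like `t + t⁻¹` on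
`t ^ j`, and the binomial theorem gives `x^n = ∑_k C(n, k) S_{n-2k}`. For odd `n = 2m+1` the terms
with negative index cancel against the positive ones in pairs, leaving the ballot numbers
`C(2m+1, m-l) - C(2m+1, m+l+2) = (2m+1)! (2l+2) / ((m-l)! (m+l+2)!)` as coefficients of
`S_{2l+1}`. -/

open Finset Polynomial

theorem pow_mul_eq_sum_antidiagonal_choose_mul {R : Type*} [CommRing R] {x : R} {A : ℤ → R}
    (hA : ∀ j, x * A j = A (j + 1) + A (j - 1)) (n : ℕ) (j : ℤ) :
    x ^ n * A j = ∑ pq ∈ antidiagonal n, (n.choose pq.1 : R) * A (j + pq.2 - pq.1) := by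
  induction n generalizing j with
  | zero => simp
  | succ n ih =>
    rw [sum_antidiagonal_choose_succ_mul (fun p q => A (j + q - p)), pow_succ, mul_assoc, hA,
      mul_add, ih, ih]
    congr 1 <;> refine sum_congr rfl fun pq hpq => ?_
    · push_cast; ring_nf
    · rw [Nat.choose_symm_of_eq_add (mem_antidiagonal.1 hpq).symm]; push_cast; ring_nf

theorem sum_antidiagonal_choose_mul_eq_sum_odd {R : Type*} [CommRing R] {A : ℤ → R}
    (hA₁ : A (-1) = 0) (hA : ∀ j : ℤ, A (-j - 2) = -A j) (m : ℕ) :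
    ∑ pq ∈ antidiagonal (2 * m + 1), ((2 * m + 1).choose pq.1 : R) * A (pq.2 - pq.1) =
      ∑ l ∈ range (m + 1),
        (((2 * m + 1).choose (m - l) : R) - (2 * m + 1).choose (m + l + 2)) * A (2 * l + 1) := by
  set n := 2 * m + 1 with hn
  have hlow : ∑ k ∈ range (m + 1), (n.choose k : R) * A ((n - k : ℕ) - k) =
      ∑ l ∈ range (m + 1), (n.choose (m - l) : R) * A (2 * l + 1) := by
    rw [← sum_range_reflect]
    refine sum_congr rfl fun l hl => ?_
    have : l ≤ m := Nat.lt_succ_iff.1 (mem_range.1 hl)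
    congr 2; omega
  have hhigh : ∑ k ∈ range (m + 1),
      (n.choose (m + 1 + k) : R) * A ((n - (m + 1 + k) : ℕ) - (m + 1 + k : ℕ)) =
      -∑ l ∈ range (m + 1), (n.choose (m + l + 2) : R) * A (2 * l + 1) := by
    rw [sum_range_succ', sum_range_succ, Nat.choose_eq_zero_of_lt (by omega : n < m + m + 2),
      show ((n - (m + 1 + 0) : ℕ) : ℤ) - (m + 1 + 0 : ℕ) = -1 by omega, hA₁]
    simp only [Nat.cast_zero, zero_mul, mul_zero, add_zero, ← sum_neg_distrib, ← mul_neg, ← hA]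
    refine sum_congr rfl fun l hl => ?_
    have : l < m := mem_range.1 hl
    congr 2
    · congr 1; omega
    · omega
  rw [Nat.sum_antidiagonal_eq_sum_range_succ_mk, Nat.succ_eq_add_one,
    show n + 1 = (m + 1) + (m + 1) by omega, sum_range_add, hlow, hhigh]
  simp only [sub_mul, sum_sub_distrib]
  ring

theorem Nat.cast_add_choose_sub_add_choose_succ {K : Type*} [Field K] [CharZero K] (k r : ℕ) :
    ((k + r).choose k : K) - (k + r).choose (r + 1) =
      (k + r).factorial * ((r : K) + 1 - k) / (k.factorial * (r + 1).factorial) := by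
  have h₁ : (k + r).choose k * k.factorial * (r + 1).factorial = (k + r).factorial * (r + 1) := by
    rw [Nat.factorial_succ, add_comm k r, ← Nat.add_choose_mul_factorial_mul_factorial r k]
    ring
  have h₂ : (k + r).choose (r + 1) * k.factorial * (r + 1).factorial = (k + r).factorial * k := by
    rcases k with _ | k
    · simp
    · rw [Nat.factorial_succ, show k + 1 + r = k + (r + 1) by ring,
        ← Nat.add_choose_mul_factorial_mul_factorial k (r + 1)]
      ring
  rw [eq_div_iff (by simp [Nat.factorial_ne_zero])]
  linear_combination (norm := skip)
    congrArg (Nat.cast (R := K)) h₁ - congrArg (Nat.cast (R := K)) h₂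
  push_cast
  ring

namespace Polynomial.Chebyshev

variable {R : Type*} [CommRing R]

theorem S_eval_eq_of_rec {x : R} {a : ℕ → R} (h0 : a 0 = 1) (h1 : a 1 = x)
    (hrec : ∀ n : ℕ, a (n + 2) = x * a (n + 1) - a n) : ∀ n : ℕ, (S R n).eval x = a n
  | 0 => by simp [h0]
  | 1 => by simp [h1]
  | n + 2 => by
    rw [hrec, ← S_eval_eq_of_rec h0 h1 hrec (n + 1), ← S_eval_eq_of_rec h0 h1 hrec n]
    push_cast
    simp

theorem X_pow_two_mul_add_one (m : ℕ) :
    (X : R[X]) ^ (2 * m + 1) = ∑ l ∈ range (m + 1),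
      (((2 * m + 1).choose (m - l) : R[X]) - (2 * m + 1).choose (m + l + 2)) * S R (2 * l + 1) := by
  have h := pow_mul_eq_sum_antidiagonal_choose_mul (A := S R)
    (fun j => by rw [S_add_one]; ring) (2 * m + 1) 0
  simp only [S_zero, mul_one, zero_add] at h
  exact h.trans (sum_antidiagonal_choose_mul_eq_sum_odd (S_neg_one R) (S_neg_sub_two R) m)

end Polynomial.Chebyshev

open Polynomial.Chebyshev in
/-- Odd-power linearization of Hecke eigenvalues: if `a(n)` satisfies the Hecke
relations at a prime (`a(0) = 1`, `a(1) = x`, `a(n+2) = x a(n+1) − a(n)`), then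
`x^{2m+1} = ∑_{l=0}^{m} (2m+1)!(2l+2)/((m−l)!(m+l+2)!) · a(2l+1)`. -/
theorem hecke_odd_power (x : ℂ) (a : ℕ → ℂ) (h0 : a 0 = 1) (h1 : a 1 = x)
    (hrec : ∀ n : ℕ, a (n + 2) = x * a (n + 1) - a n) (m : ℕ) :
    x ^ (2 * m + 1) = ∑ l ∈ Finset.range (m + 1),
      (((2 * m + 1).factorial * (2 * l + 2) : ℂ) /
        ((m - l).factorial * (m + l + 2).factorial : ℂ)) * a (2 * l + 1) := by
  calc x ^ (2 * m + 1) = (X ^ (2 * m + 1) : ℂ[X]).eval x := by simp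
    _ = ∑ l ∈ range (m + 1), (((2 * m + 1).choose (m - l) : ℂ) - (2 * m + 1).choose (m + l + 2))
          * a (2 * l + 1) := by
      simp [X_pow_two_mul_add_one, eval_finsetSum, ← S_eval_eq_of_rec h0 h1 hrec]
    _ = _ := by
      refine sum_congr rfl fun l hl => ?_
      have hl : l ≤ m := Nat.lt_succ_iff.1 (mem_range.1 hl)
      have h := Nat.cast_add_choose_sub_add_choose_succ (K := ℂ) (m - l) (m + l + 1)
      rw [show m - l + (m + l + 1) = 2 * m + 1 by omega, Nat.cast_sub hl] at h
      rw [h]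
      push_cast
      ring
end
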